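/- Let I ⊆ ℝ be an interval and let (a,b,c) : I → ℝ³ be a differentiable solution of the gauged bracket Bach flow with a(t) > 0 and c(t) > 0 for all t ∈ I. Then for every t ∈ I the function t ↦ log(a(t)/c(t)) is differentiable with derivative equal to (c(t)² − a(t)²)·(a(t)² + b(t)² + c(t)²). -/

import Mathlib

/-- First component of the right-hand side `F` of the gauged bracket Bach flow. -/
noncomputable def Fa (a b c : ℝ) : ℝ :=
  -(a / 48) * (44*a^4 + 72*a^2*b^2 - 5*a^2*c^2 + 28*b^4 + 24*b^2*c^2 - 4*c^4)

/-- Second component of the right-hand side `F` of the gauged bracket Bach flow. -/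
noncomputable def Fb (a b c : ℝ) : ℝ :=
  -(b / 48) * (60*a^4 + 104*a^2*b^2 + 57*a^2*c^2 + 44*b^4 + 104*b^2*c^2 + 60*c^4)

/-- Third component of the right-hand side `F` of the gauged bracket Bach flow. -/
noncomputable def Fc (a b c : ℝ) : ℝ :=
  -(c / 48) * (-4*a^4 + 24*a^2*b^2 - 5*a^2*c^2 + 28*b^4 + 72*b^2*c^2 + 44*c^4)

/-- `(a,b,c) : ℝ → ℝ³` is a differentiable solution of the gauged bracket Bach
flow on the set `S ⊆ ℝ`. -/
def IsBachFlowSolution (a b c : ℝ → ℝ) (S : Set ℝ) : Prop :=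
  ∀ t ∈ S,
    HasDerivAt a (Fa (a t) (b t) (c t)) t ∧
    HasDerivAt b (Fb (a t) (b t) (c t)) t ∧
    HasDerivAt c (Fc (a t) (b t) (c t)) t

theorem HasDerivAt.log_div {f g : ℝ → ℝ} {f' g' t : ℝ} (hf : HasDerivAt f f' t)
    (hg : HasDerivAt g g' t) (hft : f t ≠ 0) (hgt : g t ≠ 0) :
    HasDerivAt (fun s => Real.log (f s / g s)) (f' / f t - g' / g t) t := by
  have hquot : HasDerivAt (fun s => f s / g s) ((f' * g t - f t * g') / g t ^ 2) t :=
    hf.div hg hgt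
  convert hquot.log (div_ne_zero hft hgt) using 1
  field_simp

theorem Fa_div_sub_Fc_div {a c : ℝ} (ha : a ≠ 0) (hc : c ≠ 0) (b : ℝ) :
    Fa a b c / a - Fc a b c / c = (c ^ 2 - a ^ 2) * (a ^ 2 + b ^ 2 + c ^ 2) := by
  simp only [Fa, Fc]
  field_simp
  ring

theorem deriv_log_a_div_c_general (I : Set ℝ) (a b c : ℝ → ℝ)
    (hsol : IsBachFlowSolution a b c I)
    (ha : ∀ t ∈ I, 0 < a t) (hc : ∀ t ∈ I, 0 < c t) :
    ∀ t ∈ I, HasDerivAt (fun s => Real.log (a s / c s))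
      ((c t ^ 2 - a t ^ 2) * (a t ^ 2 + b t ^ 2 + c t ^ 2)) t := by
  intro t ht
  obtain ⟨hat, -, hct⟩ := hsol t ht
  rw [← Fa_div_sub_Fc_div (ha t ht).ne' (hc t ht).ne']
  exact hat.log_div hct (ha t ht).ne' (hc t ht).ne'

/-- along a solution of the gauged bracket Bach flow with `a, c > 0`,
the function `log(a/c)` is differentiable with derivative `(c² − a²)(a² + b² + c²)`. -/
theorem deriv_log_a_div_c (I : Set ℝ) (hI : I.OrdConnected) (a b c : ℝ → ℝ)
    (hsol : IsBachFlowSolution a b c I)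
    (ha : ∀ t ∈ I, 0 < a t) (hc : ∀ t ∈ I, 0 < c t) :
    ∀ t ∈ I, HasDerivAt (fun s => Real.log (a s / c s))
      ((c t ^ 2 - a t ^ 2) * (a t ^ 2 + b t ^ 2 + c t ^ 2)) t :=
  deriv_log_a_div_c_general I a b c hsol ha hc
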